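/- For all r in [0,1) and all b in (-1,1), with a = tan(bπ/4), the inequality ((1-r²)/(1+r²))·b - (4/π)·arctan(r) ≤ (4/π)·arctan((a-r)/(1-ar)) holds. -/

import Mathlib

/-!
Put `c = (1 - r²)/(1 + r²)` and
`f y = arctan ((y - r)/(1 - y r)) + arctan r - c · arctan y`, so that `f 0 = 0`.
Since `(1 - y r)² + (y - r)² = (1 + r²)(1 + y²) - 4 y r`, the derivative
`f' y = 4 y r (1 - r²) / (((1 - y r)² + (y - r)²)(1 + r²)(1 + y²))` has the sign of `y`,
so `f` attains its minimum at `0` and `f a ≥ 0`. Substituting `arctan a = b π / 4` and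
multiplying by `4 / π` gives the theorem.
-/

open Real Set

theorem le_of_hasDerivAt_of_mul_deriv_nonneg {f f' : ℝ → ℝ} {a : ℝ}
    (hf : ∀ x ∈ uIcc 0 a, HasDerivAt f (f' x) x) (hf' : ∀ x ∈ uIcc 0 a, 0 ≤ x * f' x) :
    f 0 ≤ f a := by
  rcases le_total 0 a with ha | ha
  · have hsub : Icc 0 a ⊆ uIcc 0 a := Icc_subset_uIcc
    refine monotoneOn_of_hasDerivWithinAt_nonneg (convex_Icc 0 a)
      (fun x hx => (hf x (hsub hx)).continuousAt.continuousWithinAt)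
      (fun x hx => (hf x (hsub (interior_subset hx))).hasDerivWithinAt)
      (fun x hx => ?_) (left_mem_Icc.2 ha) (right_mem_Icc.2 ha) ha
    rw [interior_Icc] at hx
    exact nonneg_of_mul_nonneg_right (hf' x (hsub (Ioo_subset_Icc_self hx))) hx.1
  · have hsub : Icc a 0 ⊆ uIcc 0 a := Icc_subset_uIcc'
    refine antitoneOn_of_hasDerivWithinAt_nonpos (convex_Icc a 0)
      (fun x hx => (hf x (hsub hx)).continuousAt.continuousWithinAt)
      (fun x hx => (hf x (hsub (interior_subset hx))).hasDerivWithinAt)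
      (fun x hx => ?_) (left_mem_Icc.2 ha) (right_mem_Icc.2 ha) ha
    rw [interior_Icc] at hx
    exact nonpos_of_mul_nonneg_right (hf' x (hsub (Ioo_subset_Icc_self hx))) hx.2

theorem hasDerivAt_arctan_div_one_sub_mul {r x : ℝ} (hx : 1 - x * r ≠ 0) :
    HasDerivAt (fun y => arctan ((y - r) / (1 - y * r)))
      ((1 - r ^ 2) / ((1 - x * r) ^ 2 + (x - r) ^ 2)) x := by
  have hmob : HasDerivAt (fun y => (y - r) / (1 - y * r))
      ((1 * (1 - x * r) - (x - r) * -(1 * r)) / (1 - x * r) ^ 2) x :=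
    ((hasDerivAt_id' x).sub_const r).div (((hasDerivAt_id' x).mul_const r).const_sub 1) hx
  refine ((hasDerivAt_arctan _).comp x hmob).congr_deriv ?_
  have hD : (1 - x * r) ^ 2 + (x - r) ^ 2 ≠ 0 := by positivity
  field_simp
  ring

theorem mul_arctan_le_arctan_div_one_sub_mul_add_arctan {r a : ℝ} (hr0 : 0 ≤ r) (hr1 : r ≤ 1)
    (har : a * r < 1) :
    (1 - r ^ 2) / (1 + r ^ 2) * arctan a ≤ arctan ((a - r) / (1 - a * r)) + arctan r := by
  set c := (1 - r ^ 2) / (1 + r ^ 2)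
  have hdom : ∀ x ∈ uIcc 0 a, 0 < 1 - x * r := by
    intro x hx
    rcases mem_uIcc.1 hx with hx | hx <;> nlinarith
  have hderiv : ∀ x ∈ uIcc 0 a, HasDerivAt
      (fun y => arctan ((y - r) / (1 - y * r)) + arctan r - c * arctan y)
      ((1 - r ^ 2) / ((1 - x * r) ^ 2 + (x - r) ^ 2) - c * (1 / (1 + x ^ 2))) x :=
    fun x hx => ((hasDerivAt_arctan_div_one_sub_mul (hdom x hx).ne').add_const _).sub
      ((hasDerivAt_arctan x).const_mul c)
  have hsign : ∀ x ∈ uIcc 0 a,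
      0 ≤ x * ((1 - r ^ 2) / ((1 - x * r) ^ 2 + (x - r) ^ 2) - c * (1 / (1 + x ^ 2))) := by
    intro x hx
    have hD : 0 < (1 - x * r) ^ 2 + (x - r) ^ 2 := by have := hdom x hx; positivity
    have hexpr : x * ((1 - r ^ 2) / ((1 - x * r) ^ 2 + (x - r) ^ 2) - c * (1 / (1 + x ^ 2))) =
        4 * x ^ 2 * r * (1 - r ^ 2) /
          (((1 - x * r) ^ 2 + (x - r) ^ 2) * (1 + r ^ 2) * (1 + x ^ 2)) := by
      simp only [c]
      field_simp
      ring
    rw [hexpr]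
    have : 0 ≤ 1 - r ^ 2 := by nlinarith
    positivity
  have hmin := le_of_hasDerivAt_of_mul_deriv_nonneg hderiv hsign
  simp only [zero_sub, sub_zero, zero_mul, div_one, arctan_neg, arctan_zero, mul_zero] at hmin
  linarith

/-- For all r in [0,1) and all b in (-1,1), with a = tan(bπ/4),
((1-r²)/(1+r²))·b - (4/π)·arctan(r) ≤ (4/π)·arctan((a-r)/(1-ar)). -/
theorem Bb_le_mb (r b a : ℝ) (hr0 : 0 ≤ r) (hr1 : r < 1)
    (hb0 : -1 < b) (hb1 : b < 1) (ha : a = Real.tan (b * Real.pi / 4)) :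
    ((1 - r ^ 2) / (1 + r ^ 2)) * b - (4 / Real.pi) * Real.arctan r ≤
      (4 / Real.pi) * Real.arctan ((a - r) / (1 - a * r)) := by
  have hπ := pi_pos
  have hata : arctan a = b * π / 4 := by
    rw [ha, arctan_tan] <;> nlinarith
  have ha1 : a < 1 := by
    rw [← arctan_strictMono.lt_iff_lt, hata, arctan_one]
    nlinarith
  have har : a * r < 1 := by
    rcases le_total a 0 with h | h <;> nlinarith
  have hkey := mul_arctan_le_arctan_div_one_sub_mul_add_arctan hr0 hr1.le har
  rw [hata] at hkey
  rw [sub_le_iff_le_add, ← mul_add]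
  calc (1 - r ^ 2) / (1 + r ^ 2) * b = 4 / π * ((1 - r ^ 2) / (1 + r ^ 2) * (b * π / 4)) := by
        field_simp
    _ ≤ _ := by gcongr
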